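/- Let A = [[1,1],[0,1]] and B = [[1,0],[2−z,1]] in SL(2,ℂ), and let V = (A⁻¹B)^m (AB⁻¹)^m for a positive integer m. Then tr V = 2 + (z−2)²·S_{m−1}(z)², where S denotes the Chebyshev polynomials of the second kind. In particular if z is real then tr V ≥ 2. -/

import Mathlib

/-!
`S` is Mathlib's rescaled Chebyshev polynomial `Polynomial.Chebyshev.S`, whose integer indexing
gives `S (-1) = 0`. For `M ∈ SL(2)` with trace `q`, Cayley–Hamilton `M² = q M - 1` yields
`M ^ (n + 1) = S n q • M - S (n - 1) q • 1`. Multiplying two such expansions for matrices of equal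
trace `q` and using `S n² - q S n S (n - 1) + S (n - 1)² = 1` gives
`tr (M ^ (n + 1) N ^ (n + 1)) = 2 + (tr (M N) - 2) S n q ²`.
For `M = A⁻¹B` and `N = AB⁻¹` both traces are `z` and `tr (M N) - 2 = (z - 2)²`.
-/

noncomputable def S : ℕ → ℂ → ℂ
  | 0 => fun _ => 1
  | 1 => fun q => q
  | (n + 2) => fun q => q * S (n + 1) q - S n q

open Polynomial Matrix

theorem S_eq_eval_chebyshevS (n : ℕ) (q : ℂ) : S n q = (Chebyshev.S ℂ n).eval q := by
  induction n using Nat.twoStepInduction with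
  | zero => simp [S]
  | one => simp [S]
  | more k ih₀ ih₁ =>
    show q * S (k + 1) q - S k q = _
    rw [ih₀, ih₁]
    push_cast
    simp [Chebyshev.S_add_two]

namespace Matrix

variable {R : Type*} [CommRing R]

theorem sq_eq_trace_smul_sub_det_smul_one (M : Matrix (Fin 2) (Fin 2) R) :
    M ^ 2 = M.trace • M - M.det • 1 := by
  ext i j
  fin_cases i <;> fin_cases j <;>
    simp [sq, trace_fin_two, det_fin_two, mul_apply, Fin.sum_univ_two] <;> ring

theorem pow_succ_eq_chebyshevS_of_det_eq_one {M : Matrix (Fin 2) (Fin 2) R} (hM : M.det = 1)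
    (n : ℕ) :
    M ^ (n + 1) =
      (Chebyshev.S R n).eval M.trace • M - (Chebyshev.S R (n - 1)).eval M.trace • 1 := by
  induction n with
  | zero => simp
  | succ n ih =>
    have hS := congrArg (eval M.trace) (Chebyshev.S_add_one R n)
    simp only [eval_sub, eval_mul, eval_X] at hS
    rw [Nat.cast_succ, add_sub_cancel_right, hS, pow_succ, ih, sub_mul, smul_mul_assoc,
      smul_one_mul, ← sq, sq_eq_trace_smul_sub_det_smul_one, hM]
    module

theorem trace_pow_mul_pow_of_det_eq_one {M N : Matrix (Fin 2) (Fin 2) R}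
    (hM : M.det = 1) (hN : N.det = 1) (htr : M.trace = N.trace) (n : ℕ) :
    (M ^ (n + 1) * N ^ (n + 1)).trace =
      2 + ((M * N).trace - 2) * (Chebyshev.S R n).eval M.trace ^ 2 := by
  have hS := congrArg (eval M.trace) (Chebyshev.S_sq_add_S_sq R (n - 1))
  simp only [eval_sub, eval_add, eval_mul, eval_pow, eval_X, eval_one, sub_add_cancel] at hS
  rw [pow_succ_eq_chebyshevS_of_det_eq_one hM, pow_succ_eq_chebyshevS_of_det_eq_one hN, ← htr]
  simp only [sub_mul, mul_sub, smul_mul_assoc, mul_smul_comm, one_mul, mul_one,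
    trace_sub, trace_smul, trace_one, smul_eq_mul, Fintype.card_fin]
  rw [← htr]
  push_cast
  linear_combination 2 * hS

end Matrix

theorem stmt_16 (m : ℕ) (hm : 0 < m) (z : ℂ)
    (A B : Matrix (Fin 2) (Fin 2) ℂ)
    (hA : A = !![1, 1; 0, 1]) (hB : B = !![1, 0; 2 - z, 1]) :
    Matrix.trace ((A⁻¹ * B) ^ m * (A * B⁻¹) ^ m) =
      2 + (z - 2) ^ 2 * S (m - 1) z ^ 2 ∧
    (∀ x : ℝ, z = (x : ℂ) → ∃ r : ℝ, 2 ≤ r ∧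
      Matrix.trace ((A⁻¹ * B) ^ m * (A * B⁻¹) ^ m) = (r : ℂ)) := by
  obtain ⟨n, rfl⟩ := Nat.exists_eq_add_one_of_ne_zero hm.ne'
  have hAinv : A⁻¹ = !![1, -1; 0, 1] :=
    inv_eq_left_inv (by rw [hA, mul_fin_two, one_fin_two]; norm_num)
  have hBinv : B⁻¹ = !![1, 0; z - 2, 1] :=
    inv_eq_left_inv (by rw [hB, mul_fin_two, one_fin_two]; ring_nf)
  have hM : A⁻¹ * B = !![z - 1, -1; 2 - z, 1] := by
    rw [hAinv, hB, mul_fin_two]; ring_nf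
  have hN : A * B⁻¹ = !![z - 1, 1; z - 2, 1] := by
    rw [hA, hBinv, mul_fin_two]; ring_nf
  have hdetM : (A⁻¹ * B).det = 1 := by rw [hM, det_fin_two_of]; ring
  have hdetN : (A * B⁻¹).det = 1 := by rw [hN, det_fin_two_of]; ring
  have htrM : (A⁻¹ * B).trace = z := by rw [hM, trace_fin_two_of]; ring
  have htrN : (A * B⁻¹).trace = z := by rw [hN, trace_fin_two_of]; ring
  have htrMN : (A⁻¹ * B * (A * B⁻¹)).trace = 2 + (z - 2) ^ 2 := by
    rw [hM, hN, mul_fin_two, trace_fin_two_of]; ring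
  have htrace : ((A⁻¹ * B) ^ (n + 1) * (A * B⁻¹) ^ (n + 1)).trace =
      2 + (z - 2) ^ 2 * (Chebyshev.S ℂ n).eval z ^ 2 := by
    rw [trace_pow_mul_pow_of_det_eq_one hdetM hdetN (htrM.trans htrN.symm), htrMN, htrM]
    ring
  refine ⟨by rw [htrace, Nat.add_sub_cancel, S_eq_eval_chebyshevS], ?_⟩
  rintro x rfl
  refine ⟨2 + (x - 2) ^ 2 * (Chebyshev.S ℝ n).eval x ^ 2, le_add_of_nonneg_right (by positivity),
    ?_⟩
  rw [htrace, ← Chebyshev.complex_ofReal_eval_S]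
  push_cast
  ring
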